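/- arXiv:math/0606555 — 2 statements merged into one kernel-verified Lean document; each statement's English description precedes it below -/
import Mathlib

section
/- Let s > 1/2, b > 1/2 and e ∈ {−1, +1}. Then there is a constant c > 0 such that for all nonnegative functions f, g, h ∈ L²(ℝ²): ∫∫∫∫_{ℝ⁴} f(ξ₁,τ₁) g(ξ₂,τ₂) h(ξ₁+ξ₂, τ₁+τ₂) · ⟨ξ₁+ξ₂⟩^{−s} · ⟨τ₂ + e|ξ₂|⟩^{−b} dξ₁ dτ₁ dξ₂ dτ₂ ≤ c ‖f‖_{L²} ‖g‖_{L²} ‖h‖_{L²}. -/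
/-!
Write z = x + y. The form becomes `∫ H(z) T(z) dz` with
`T(z) = ∫ F(x) w(z, z - x) G(z - x) dx`. Cauchy–Schwarz in `x` gives
`T(z)² ≤ ‖G‖² ∫ F(x)² w(z, z - x)² dx`, and Cauchy–Schwarz in `z` then bounds the form by
`‖F‖ ‖G‖ ‖H‖ sup_x (∫ w(z, z - x)² dz)^{1/2}`. For `w(z, y) = ⟨z₁⟩^{-s} ⟨y₂ + e|y₁|⟩^{-b}` the
shear `z₂ ↦ z₂ + e|z₁ - x₁| - x₂` factorises that integral as
`‖⟨·⟩^{-s}‖₂² ‖⟨·⟩^{-b}‖₂²`, which is finite because `s, b > 1/2`.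
-/

open MeasureTheory Function
open scoped ENNReal

/-- Japanese bracket `⟨x⟩ = (1 + |x|²)^{1/2}`. -/
noncomputable def jb (x : ℝ) : ℝ := Real.sqrt (1 + x ^ 2)

theorem ENNReal.exists_pos_le_ofReal_sq {D : ℝ≥0∞} (hD : D ≠ ∞) :
    ∃ c > (0 : ℝ), D ≤ ENNReal.ofReal c ^ 2 := by
  refine ⟨D.toReal + 1, by positivity, ?_⟩
  calc D = ENNReal.ofReal D.toReal := (ENNReal.ofReal_toReal hD).symm
    _ ≤ ENNReal.ofReal (D.toReal + 1) := ENNReal.ofReal_le_ofReal (by linarith)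
    _ ≤ ENNReal.ofReal (D.toReal + 1) ^ 2 :=
      le_self_pow₀ (ENNReal.one_le_ofReal.2 (by simp)) two_ne_zero

theorem eLpNorm_two_sq {α ε : Type*} [MeasurableSpace α] [ENorm ε] {μ : Measure α}
    (f : α → ε) : eLpNorm f 2 μ ^ 2 = ∫⁻ x, ‖f x‖ₑ ^ 2 ∂μ := by
  have h := eLpNorm_nnreal_pow_eq_lintegral (f := f) (μ := μ) (p := 2) two_ne_zero
  simpa only [ENNReal.coe_ofNat, NNReal.coe_ofNat, ENNReal.rpow_two] using h

theorem ENNReal.sq_lintegral_mul_le {α : Type*} [MeasurableSpace α] {μ : Measure α}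
    {f g : α → ℝ≥0∞} (hf : AEMeasurable f μ) (hg : AEMeasurable g μ) :
    (∫⁻ x, f x * g x ∂μ) ^ 2 ≤ (∫⁻ x, f x ^ 2 ∂μ) * ∫⁻ x, g x ^ 2 ∂μ := by
  calc (∫⁻ x, f x * g x ∂μ) ^ 2
      ≤ ((∫⁻ x, f x ^ (2 : ℝ) ∂μ) ^ (1 / 2 : ℝ) * (∫⁻ x, g x ^ (2 : ℝ) ∂μ) ^ (1 / 2 : ℝ)) ^ 2 :=
        pow_le_pow_left' (ENNReal.lintegral_mul_le_Lp_mul_Lq μ .two_two hf hg) 2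
    _ = (∫⁻ x, f x ^ 2 ∂μ) * ∫⁻ x, g x ^ 2 ∂μ := by
        simp only [mul_pow, ← ENNReal.rpow_natCast, ← ENNReal.rpow_mul]
        norm_num

section Shear

variable {α β : Type*} [MeasurableSpace α] [MeasurableSpace β] [AddGroup β]
  [MeasurableAdd₂ β] {μ : Measure α} {ν : Measure β} [SFinite ν] [ν.IsAddRightInvariant]
  {u : α → ℝ≥0∞} {v : β → ℝ≥0∞} {φ : α → β}

theorem lintegral_prod_mul_shear (hu : Measurable u) (hv : Measurable v) (hφ : Measurable φ) :
    ∫⁻ z, u z.1 * v (z.2 + φ z.1) ∂μ.prod ν = (∫⁻ x, u x ∂μ) * ∫⁻ y, v y ∂ν := by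
  rw [lintegral_prod _ (by fun_prop)]
  calc ∫⁻ x, ∫⁻ y, u x * v (y + φ x) ∂ν ∂μ = ∫⁻ x, u x * ∫⁻ y, v y ∂ν ∂μ := by
        refine lintegral_congr fun x => ?_
        rw [lintegral_const_mul _ (by fun_prop), lintegral_add_right_eq_self v (φ x)]
    _ = (∫⁻ x, u x ∂μ) * ∫⁻ y, v y ∂ν := lintegral_mul_const _ hu

theorem lintegral_prod_mul_shear_sub [AddGroup α] [MeasurableSub α] (hu : Measurable u)
    (hv : Measurable v) (hφ : Measurable φ) (x : α × β) :
    ∫⁻ z, u z.1 * v ((z - x).2 + φ (z - x).1) ∂μ.prod ν = (∫⁻ a, u a ∂μ) * ∫⁻ b, v b ∂ν := by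
  have h_shear (z : α × β) : (z - x).2 + φ (z - x).1 = z.2 + (-x.2 + φ (z.1 - x.1)) := by
    rw [Prod.fst_sub, Prod.snd_sub, sub_eq_add_neg, add_assoc]
  simp only [h_shear]
  exact lintegral_prod_mul_shear (φ := fun a => -x.2 + φ (a - x.1)) hu hv (by fun_prop)

end Shear

section Trilinear

variable {α : Type*} [MeasurableSpace α] [AddCommGroup α] [MeasurableAdd₂ α] [MeasurableNeg α]
  {μ : Measure α}

variable (μ) in
noncomputable def weightedConv (w : α → α → ℝ≥0∞) (F G : α → ℝ≥0∞) (z : α) : ℝ≥0∞ :=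
  ∫⁻ x, F x * w z (z - x) * G (z - x) ∂μ

variable {F G H : α → ℝ≥0∞} {w : α → α → ℝ≥0∞} {C : ℝ≥0∞}

@[fun_prop]
theorem measurable_weightedConv [SFinite μ] (hF : Measurable F) (hG : Measurable G)
    (hw : Measurable (uncurry w)) : Measurable (weightedConv μ w F G) := by
  unfold weightedConv; fun_prop

theorem sq_weightedConv_le [μ.IsAddLeftInvariant] [μ.IsNegInvariant]
    (hF : Measurable F) (hG : Measurable G) (hw : Measurable (uncurry w)) (z : α) :
    weightedConv μ w F G z ^ 2
      ≤ (∫⁻ x, F x ^ 2 * w z (z - x) ^ 2 ∂μ) * ∫⁻ x, G x ^ 2 ∂μ := by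
  calc weightedConv μ w F G z ^ 2
      ≤ (∫⁻ x, (F x * w z (z - x)) ^ 2 ∂μ) * ∫⁻ x, G (z - x) ^ 2 ∂μ :=
        ENNReal.sq_lintegral_mul_le (by fun_prop) (by fun_prop)
    _ = _ := by simp only [mul_pow, lintegral_sub_left_eq_self (fun x => G x ^ 2) z]

theorem lintegral_sq_weightedConv_le [SFinite μ] [μ.IsAddLeftInvariant] [μ.IsNegInvariant]
    (hF : Measurable F) (hG : Measurable G) (hw : Measurable (uncurry w))
    (hC : ∀ x, ∫⁻ z, w z (z - x) ^ 2 ∂μ ≤ C ^ 2) :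
    ∫⁻ z, weightedConv μ w F G z ^ 2 ∂μ ≤ C ^ 2 * (∫⁻ x, F x ^ 2 ∂μ) * ∫⁻ x, G x ^ 2 ∂μ := by
  calc ∫⁻ z, weightedConv μ w F G z ^ 2 ∂μ
      ≤ ∫⁻ z, (∫⁻ x, F x ^ 2 * w z (z - x) ^ 2 ∂μ) * ∫⁻ x, G x ^ 2 ∂μ ∂μ :=
        lintegral_mono (sq_weightedConv_le hF hG hw)
    _ = (∫⁻ x, F x ^ 2 * ∫⁻ z, w z (z - x) ^ 2 ∂μ ∂μ) * ∫⁻ x, G x ^ 2 ∂μ := by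
        rw [lintegral_mul_const _ (by fun_prop), lintegral_lintegral_swap (by fun_prop)]
        congr 1
        exact lintegral_congr fun x => lintegral_const_mul _ (by fun_prop)
    _ ≤ (∫⁻ x, F x ^ 2 * C ^ 2 ∂μ) * ∫⁻ x, G x ^ 2 ∂μ := by
        gcongr with x
        exact hC x
    _ = C ^ 2 * (∫⁻ x, F x ^ 2 ∂μ) * ∫⁻ x, G x ^ 2 ∂μ := by
        rw [lintegral_mul_const _ (by fun_prop), mul_comm (∫⁻ x, F x ^ 2 ∂μ)]

theorem lintegral_trilinear_add_eq [SFinite μ] [μ.IsAddLeftInvariant]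
    (hF : Measurable F) (hG : Measurable G) (hH : Measurable H) (hw : Measurable (uncurry w)) :
    ∫⁻ x, ∫⁻ y, F x * G y * H (x + y) * w (x + y) y ∂μ ∂μ
      = ∫⁻ z, H z * weightedConv μ w F G z ∂μ := by
  calc ∫⁻ x, ∫⁻ y, F x * G y * H (x + y) * w (x + y) y ∂μ ∂μ
      = ∫⁻ x, ∫⁻ z, F x * w z (z - x) * G (z - x) * H z ∂μ ∂μ := by
        refine lintegral_congr fun x => ?_
        rw [← lintegral_add_left_eq_self (fun z => F x * w z (z - x) * G (z - x) * H z) x]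
        simp only [add_sub_cancel_left]
        congr 1; ext y; ring
    _ = ∫⁻ z, ∫⁻ x, F x * w z (z - x) * G (z - x) * H z ∂μ ∂μ :=
        lintegral_lintegral_swap (by fun_prop)
    _ = ∫⁻ z, H z * weightedConv μ w F G z ∂μ := by
        refine lintegral_congr fun z => ?_
        rw [lintegral_mul_const _ (by fun_prop), mul_comm, weightedConv]

theorem lintegral_trilinear_add_le [SFinite μ] [μ.IsAddLeftInvariant] [μ.IsNegInvariant]
    (hF : Measurable F) (hG : Measurable G) (hH : Measurable H) (hw : Measurable (uncurry w))
    (hC : ∀ x, ∫⁻ z, w z (z - x) ^ 2 ∂μ ≤ C ^ 2) :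
    ∫⁻ p, F p.1 * G p.2 * H (p.1 + p.2) * w (p.1 + p.2) p.2 ∂μ.prod μ
      ≤ C * eLpNorm F 2 μ * eLpNorm G 2 μ * eLpNorm H 2 μ := by
  refine (lintegral_prod_le _).trans ?_
  rw [lintegral_trilinear_add_eq hF hG hH hw, ← ENNReal.pow_le_pow_left_iff two_ne_zero]
  calc (∫⁻ z, H z * weightedConv μ w F G z ∂μ) ^ 2
      ≤ (∫⁻ z, H z ^ 2 ∂μ) * ∫⁻ z, weightedConv μ w F G z ^ 2 ∂μ :=
        ENNReal.sq_lintegral_mul_le (by fun_prop) (by fun_prop)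
    _ ≤ (∫⁻ z, H z ^ 2 ∂μ) * (C ^ 2 * (∫⁻ x, F x ^ 2 ∂μ) * ∫⁻ x, G x ^ 2 ∂μ) := by
        gcongr
        exact lintegral_sq_weightedConv_le hF hG hw hC
    _ = (C * eLpNorm F 2 μ * eLpNorm G 2 μ * eLpNorm H 2 μ) ^ 2 := by
        simp only [mul_pow, eLpNorm_two_sq, enorm_eq_self]
        ring

end Trilinear

theorem jb_nonneg (u : ℝ) : 0 ≤ jb u := Real.sqrt_nonneg _

@[fun_prop]
theorem measurable_jb : Measurable jb := by
  unfold jb; fun_prop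

theorem jb_rpow_neg_sq (r u : ℝ) : (jb u ^ (-r)) ^ 2 = (1 + u ^ 2) ^ (-r) := by
  rw [jb, ← Real.rpow_natCast, ← Real.rpow_mul (Real.sqrt_nonneg _),
    Real.sqrt_eq_rpow, ← Real.rpow_mul (by positivity)]
  congr 1
  ring

theorem lintegral_ofReal_jb_rpow_neg_sq_lt_top {r : ℝ} (hr : 1 / 2 < r) :
    ∫⁻ u, ENNReal.ofReal (jb u ^ (-r)) ^ 2 < ∞ := by
  have h_int : Integrable fun u : ℝ => (1 + u ^ 2) ^ (-r) := by
    simpa [Real.norm_eq_abs, sq_abs, neg_div] using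
      integrable_rpow_neg_one_add_norm_sq (E := ℝ) (r := 2 * r) (by simp; linarith)
  have h_sq (u : ℝ) :
      ENNReal.ofReal (jb u ^ (-r)) ^ 2 = ENNReal.ofReal ((1 + u ^ 2) ^ (-r)) := by
    rw [← ENNReal.ofReal_pow (Real.rpow_nonneg (jb_nonneg u) _), jb_rpow_neg_sq]
  simpa only [h_sq] using h_int.lintegral_lt_top

theorem stmt12_general (s b : ℝ) (hs : 1/2 < s) (hb : 1/2 < b)
    (e : ℝ) :
    ∃ c > (0:ℝ), ∀ f g h : ℝ × ℝ → ℝ, Measurable f → Measurable g → Measurable h →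
      (∀ x, 0 ≤ f x) → (∀ x, 0 ≤ g x) → (∀ x, 0 ≤ h x) →
      MemLp f 2 volume → MemLp g 2 volume → MemLp h 2 volume →
      (∫⁻ p : (ℝ × ℝ) × (ℝ × ℝ),
        ENNReal.ofReal (f p.1 * g p.2 * h (p.1.1 + p.2.1, p.1.2 + p.2.2) *
          jb (p.1.1 + p.2.1) ^ (-s) * jb (p.2.2 + e * |p.2.1|) ^ (-b)))
      ≤ ENNReal.ofReal c * eLpNorm f 2 volume * eLpNorm g 2 volume * eLpNorm h 2 volume := by
  set W : ℝ → ℝ → ℝ≥0∞ := fun r u => ENNReal.ofReal (jb u ^ (-r))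
  obtain ⟨c, hc, hc_sq⟩ := ENNReal.exists_pos_le_ofReal_sq <|
    ENNReal.mul_ne_top (lintegral_ofReal_jb_rpow_neg_sq_lt_top hs).ne
      (lintegral_ofReal_jb_rpow_neg_sq_lt_top hb).ne
  have h_weight (x : ℝ × ℝ) :
      ∫⁻ z, (W s z.1 * W b ((z - x).2 + e * |(z - x).1|)) ^ 2 ≤ ENNReal.ofReal c ^ 2 := by
    simp only [mul_pow]
    rw [Measure.volume_eq_prod, lintegral_prod_mul_shear_sub (u := fun t => W s t ^ 2)
      (v := fun t => W b t ^ 2) (φ := fun t => e * |t|) (by fun_prop) (by fun_prop)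
      (by fun_prop) x]
    exact hc_sq
  refine ⟨c, hc, fun f g h hf hg hh hf0 hg0 hh0 _ _ _ => ?_⟩
  have h_trilinear := lintegral_trilinear_add_le (μ := volume) (F := ENNReal.ofReal ∘ f)
    (G := ENNReal.ofReal ∘ g) (H := ENNReal.ofReal ∘ h)
    (w := fun z y => W s z.1 * W b (y.2 + e * |y.1|)) (by fun_prop) (by fun_prop)
    (by fun_prop) (by fun_prop) h_weight
  rw [eLpNorm_ofReal f (ae_of_all _ hf0), eLpNorm_ofReal g (ae_of_all _ hg0),
    eLpNorm_ofReal h (ae_of_all _ hh0)] at h_trilinear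
  refine le_of_eq_of_le (lintegral_congr fun p => ?_) h_trilinear
  simp only [Function.comp_apply, W, ENNReal.ofReal_mul, hf0, hg0, hh0, jb_nonneg,
    Real.rpow_nonneg, Prod.fst_add, mul_assoc]
  rfl

theorem stmt12 (s b : ℝ) (hs : 1/2 < s) (hb : 1/2 < b)
    (e : ℝ) (he : e = 1 ∨ e = -1) :
    ∃ c > (0:ℝ), ∀ f g h : ℝ × ℝ → ℝ, Measurable f → Measurable g → Measurable h →
      (∀ x, 0 ≤ f x) → (∀ x, 0 ≤ g x) → (∀ x, 0 ≤ h x) →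
      MemLp f 2 volume → MemLp g 2 volume → MemLp h 2 volume →
      (∫⁻ p : (ℝ × ℝ) × (ℝ × ℝ),
        ENNReal.ofReal (f p.1 * g p.2 * h (p.1.1 + p.2.1, p.1.2 + p.2.2) *
          jb (p.1.1 + p.2.1) ^ (-s) * jb (p.2.2 + e * |p.2.1|) ^ (-b)))
      ≤ ENNReal.ofReal c * eLpNorm f 2 volume * eLpNorm g 2 volume * eLpNorm h 2 volume :=
  stmt12_general s b hs hb e
end

section
/- Let s > 1/2, b > 1/2 and e ∈ {−1, +1}. Then there is a constant c > 0 such that for all nonnegative functions f, g, h ∈ L²(ℝ²): ∫∫∫∫_{ℝ⁴} f(ξ₁,τ₁) g(ξ₂,τ₂) h(ξ₁+ξ₂, τ₁+τ₂) · ⟨ξ₁⟩^{−s} · ⟨τ₁+τ₂ + e|ξ₁+ξ₂|⟩^{−b} dξ₁ dτ₁ dξ₂ dτ₂ ≤ c ‖f‖_{L²} ‖g‖_{L²} ‖h‖_{L²}. -/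
/-
After Fubini, the integral becomes an integral over `(ξ₁, ξ₂)` of `⟨ξ₁⟩^{-s}` times a
trilinear expression in the `τ`-variables. For fixed frequencies, the convolution of `f(ξ₁, ·)`
and `g(ξ₂, ·)` is bounded pointwise by the product of their `L²` norms (Cauchy–Schwarz), while
`h(ξ, ·) ⟨· + e|ξ|⟩^{-b}` is integrable with norm at most `‖h(ξ, ·)‖₂ ‖⟨·⟩^{-b}‖₂`. What remains
is the same estimate one dimension lower for the `L²` norms of the sections, where now
`⟨ξ₁⟩^{-s} ‖f(ξ₁, ·)‖₂` is integrable. Both weights are square integrable because `s, b > 1/2`.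
-/

open MeasureTheory

open ENNReal

theorem ENNReal.lintegral_mul_le_eLpNorm_two_mul {α : Type*} [MeasurableSpace α] {μ : Measure α}
    {u v : α → ℝ≥0∞} (hu : AEMeasurable u μ) (hv : AEMeasurable v μ) :
    ∫⁻ x, u x * v x ∂μ ≤ eLpNorm u 2 μ * eLpNorm v 2 μ := by
  simpa [eLpNorm_eq_lintegral_rpow_enorm_toReal] using
    ENNReal.lintegral_mul_le_Lp_mul_Lq μ Real.HolderConjugate.two_two hu hv

section Convolution

variable {G : Type*} [MeasurableSpace G] [AddCommGroup G] [MeasurableAdd₂ G]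
  {μ : Measure G} [μ.IsAddLeftInvariant]

theorem lintegral_mul_comp_add_le {u v : G → ℝ≥0∞} (hu : AEMeasurable u μ) (hv : Measurable v)
    (x : G) : ∫⁻ y, u y * v (x + y) ∂μ ≤ eLpNorm u 2 μ * eLpNorm v 2 μ := by
  have htrans : MeasurePreserving (x + ·) μ μ := measurePreserving_add_left μ x
  calc ∫⁻ y, u y * v (x + y) ∂μ ≤ eLpNorm u 2 μ * eLpNorm (v ∘ (x + ·)) 2 μ :=
        ENNReal.lintegral_mul_le_eLpNorm_two_mul hu (hv.comp htrans.measurable).aemeasurable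
    _ = eLpNorm u 2 μ * eLpNorm v 2 μ := by
        rw [eLpNorm_comp_measurePreserving hv.aestronglyMeasurable htrans]

theorem lintegral_mul_comp_sub_le [MeasurableNeg G] [μ.IsNegInvariant] {u v : G → ℝ≥0∞}
    (hu : AEMeasurable u μ) (hv : Measurable v) (x : G) :
    ∫⁻ y, u y * v (x - y) ∂μ ≤ eLpNorm u 2 μ * eLpNorm v 2 μ := by
  have hrefl : MeasurePreserving (x - ·) μ μ := Measure.measurePreserving_sub_left μ x
  calc ∫⁻ y, u y * v (x - y) ∂μ ≤ eLpNorm u 2 μ * eLpNorm (v ∘ (x - ·)) 2 μ :=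
        ENNReal.lintegral_mul_le_eLpNorm_two_mul hu (hv.comp hrefl.measurable).aemeasurable
    _ = eLpNorm u 2 μ * eLpNorm v 2 μ := by
        rw [eLpNorm_comp_measurePreserving hv.aestronglyMeasurable hrefl]

theorem lintegral_lintegral_mul_comp_add_le {k u v : G → ℝ≥0∞} (hk : AEMeasurable k μ)
    (hu : Measurable u) (hv : Measurable v) :
    ∫⁻ x, ∫⁻ y, k x * u y * v (x + y) ∂μ ∂μ ≤
      (∫⁻ x, k x ∂μ) * eLpNorm u 2 μ * eLpNorm v 2 μ := by
  calc ∫⁻ x, ∫⁻ y, k x * u y * v (x + y) ∂μ ∂μ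
      = ∫⁻ x, k x * ∫⁻ y, u y * v (x + y) ∂μ ∂μ := by
        refine lintegral_congr fun x => ?_
        simp_rw [mul_assoc]
        exact lintegral_const_mul _ (hu.mul (hv.comp (measurable_const_add x)))
    _ ≤ ∫⁻ x, k x * (eLpNorm u 2 μ * eLpNorm v 2 μ) ∂μ := by
        gcongr with x
        exact lintegral_mul_comp_add_le hu.aemeasurable hv x
    _ = (∫⁻ x, k x ∂μ) * eLpNorm u 2 μ * eLpNorm v 2 μ := by
        rw [lintegral_mul_const'' _ hk, mul_assoc]

theorem lintegral_lintegral_mul_mul_comp_add_le [MeasurableNeg G] [SFinite μ] [μ.IsNegInvariant]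
    {k u v : G → ℝ≥0∞} (hk : Measurable k) (hu : Measurable u) (hv : Measurable v) :
    ∫⁻ x, ∫⁻ y, u x * v y * k (x + y) ∂μ ∂μ ≤
      (∫⁻ t, k t ∂μ) * eLpNorm u 2 μ * eLpNorm v 2 μ := by
  calc ∫⁻ x, ∫⁻ y, u x * v y * k (x + y) ∂μ ∂μ
      = ∫⁻ x, ∫⁻ t, u x * v (t - x) * k t ∂μ ∂μ := by
        refine lintegral_congr fun x => ?_
        simpa using lintegral_add_left_eq_self (μ := μ) (fun t => u x * v (t - x) * k t) x
    _ = ∫⁻ t, k t * ∫⁻ x, u x * v (t - x) ∂μ ∂μ := by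
        rw [lintegral_lintegral_swap (by fun_prop)]
        refine lintegral_congr fun t => ?_
        rw [← lintegral_const_mul _ (by fun_prop)]
        simp only [mul_comm (k t)]
    _ ≤ ∫⁻ t, k t * (eLpNorm u 2 μ * eLpNorm v 2 μ) ∂μ := by
        gcongr with t
        exact lintegral_mul_comp_sub_le hu.aemeasurable hv t
    _ = (∫⁻ t, k t ∂μ) * eLpNorm u 2 μ * eLpNorm v 2 μ := by
        rw [lintegral_mul_const _ hk, mul_assoc]

end Convolution

section Product

variable {α β : Type*} [MeasurableSpace α] [MeasurableSpace β] {μ : Measure α} {ν : Measure β}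
  [SFinite ν]

theorem lintegral_prod_prod_eq_iterated [SFinite μ] {Φ : (α × β) × (α × β) → ℝ≥0∞}
    (hΦ : Measurable Φ) :
    ∫⁻ q, Φ q ∂(μ.prod ν).prod (μ.prod ν) =
      ∫⁻ x₁, ∫⁻ x₂, ∫⁻ y₁, ∫⁻ y₂, Φ ((x₁, y₁), (x₂, y₂)) ∂ν ∂ν ∂μ ∂μ := by
  have hΦ' : Measurable fun r : ((α × β) × α) × β => Φ (r.1.1, (r.1.2, r.2)) := by fun_prop
  calc ∫⁻ q, Φ q ∂(μ.prod ν).prod (μ.prod ν)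
      = ∫⁻ p, ∫⁻ x₂, ∫⁻ y₂, Φ (p, (x₂, y₂)) ∂ν ∂μ ∂μ.prod ν := by
        rw [lintegral_prod _ hΦ.aemeasurable]
        exact lintegral_congr fun p =>
          lintegral_prod _ (hΦ.comp measurable_prodMk_left).aemeasurable
    _ = ∫⁻ x₁, ∫⁻ y₁, ∫⁻ x₂, ∫⁻ y₂, Φ ((x₁, y₁), (x₂, y₂)) ∂ν ∂μ ∂ν ∂μ :=
        lintegral_prod _ hΦ'.lintegral_prod_right'.lintegral_prod_right'.aemeasurable
    _ = _ := lintegral_congr fun x₁ => lintegral_lintegral_swap (by fun_prop)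

variable {p : ℝ≥0∞} {F : α × β → ℝ≥0∞}

theorem Measurable.eLpNorm_section (hF : Measurable F) (hp0 : p ≠ 0) (hptop : p ≠ ⊤) :
    Measurable fun x => eLpNorm (fun y => F (x, y)) p ν := by
  simp only [eLpNorm_eq_lintegral_rpow_enorm_toReal hp0 hptop, enorm_eq_self]
  exact (hF.pow_const _).lintegral_prod_right'.pow_const _

theorem eLpNorm_eLpNorm_section [SFinite μ] (hF : Measurable F) (hp0 : p ≠ 0) (hptop : p ≠ ⊤) :
    eLpNorm (fun x => eLpNorm (fun y => F (x, y)) p ν) p μ = eLpNorm F p (μ.prod ν) := by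
  have hp : 0 < p.toReal := ENNReal.toReal_pos hp0 hptop
  simp only [eLpNorm_eq_lintegral_rpow_enorm_toReal hp0 hptop, enorm_eq_self,
    ← ENNReal.rpow_mul, one_div, inv_mul_cancel₀ hp.ne', ENNReal.rpow_one]
  rw [lintegral_prod _ (hF.pow_const _).aemeasurable]

end Product

section Trilinear

variable {G₁ G₂ : Type*} [MeasurableSpace G₁] [AddCommGroup G₁] [MeasurableAdd₂ G₁]
  {μ : Measure G₁} [SFinite μ] [μ.IsAddLeftInvariant]
  [MeasurableSpace G₂] [AddCommGroup G₂] [MeasurableAdd₂ G₂] [MeasurableNeg G₂]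
  {ν : Measure G₂} [SFinite ν] [ν.IsAddLeftInvariant] [ν.IsNegInvariant]

theorem lintegral_weighted_trilinear_le {f g h : G₁ × G₂ → ℝ≥0∞} {a : G₁ → ℝ≥0∞}
    {w : G₂ → ℝ≥0∞} {c : G₁ → G₂} (hf : Measurable f) (hg : Measurable g) (hh : Measurable h)
    (ha : Measurable a) (hw : Measurable w) (hc : Measurable c) :
    ∫⁻ q, f q.1 * g q.2 * h (q.1.1 + q.2.1, q.1.2 + q.2.2) * a q.1.1 *
        w (q.1.2 + q.2.2 + c (q.1.1 + q.2.1)) ∂(μ.prod ν).prod (μ.prod ν) ≤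
      eLpNorm a 2 μ * eLpNorm w 2 ν *
        eLpNorm f 2 (μ.prod ν) * eLpNorm g 2 (μ.prod ν) * eLpNorm h 2 (μ.prod ν) := by
  set sf := fun x => eLpNorm (fun y => f (x, y)) 2 ν
  set sg := fun x => eLpNorm (fun y => g (x, y)) 2 ν
  set sh := fun x => eLpNorm (fun y => h (x, y)) 2 ν
  have hsf : Measurable sf := hf.eLpNorm_section two_ne_zero ofNat_ne_top
  have hsg : Measurable sg := hg.eLpNorm_section two_ne_zero ofNat_ne_top
  have hsh : Measurable sh := hh.eLpNorm_section two_ne_zero ofNat_ne_top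
  have fiber_bound : ∀ x₁ x₂, ∫⁻ y₁, ∫⁻ y₂,
      f (x₁, y₁) * g (x₂, y₂) * (h (x₁ + x₂, y₁ + y₂) * w (c (x₁ + x₂) + (y₁ + y₂))) ∂ν ∂ν ≤
        sf x₁ * sg x₂ * (sh (x₁ + x₂) * eLpNorm w 2 ν) := by
    intro x₁ x₂
    calc _ ≤ (∫⁻ y, h (x₁ + x₂, y) * w (c (x₁ + x₂) + y) ∂ν) * sf x₁ * sg x₂ :=
          lintegral_lintegral_mul_mul_comp_add_le (by fun_prop) (by fun_prop) (by fun_prop)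
      _ ≤ sh (x₁ + x₂) * eLpNorm w 2 ν * sf x₁ * sg x₂ := by
          gcongr
          exact lintegral_mul_comp_add_le (by fun_prop) hw _
      _ = _ := by ring
  calc _ = ∫⁻ x₁, ∫⁻ x₂, a x₁ * ∫⁻ y₁, ∫⁻ y₂, f (x₁, y₁) * g (x₂, y₂) *
          (h (x₁ + x₂, y₁ + y₂) * w (c (x₁ + x₂) + (y₁ + y₂))) ∂ν ∂ν ∂μ ∂μ := by
        rw [lintegral_prod_prod_eq_iterated (by fun_prop)]
        refine lintegral_congr fun x₁ => lintegral_congr fun x₂ => ?_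
        rw [← lintegral_const_mul _ (by fun_prop)]
        refine lintegral_congr fun y₁ => ?_
        rw [← lintegral_const_mul _ (by fun_prop)]
        refine lintegral_congr fun y₂ => ?_
        rw [add_comm (c _)]
        ring
    _ ≤ ∫⁻ x₁, ∫⁻ x₂, a x₁ * (sf x₁ * sg x₂ * (sh (x₁ + x₂) * eLpNorm w 2 ν)) ∂μ ∂μ := by
        gcongr with x₁ x₂
        exact fiber_bound x₁ x₂
    _ = (∫⁻ x₁, ∫⁻ x₂, a x₁ * sf x₁ * sg x₂ * sh (x₁ + x₂) ∂μ ∂μ) * eLpNorm w 2 ν := by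
        rw [← lintegral_mul_const _ (by fun_prop)]
        refine lintegral_congr fun x₁ => ?_
        rw [← lintegral_mul_const _ (by fun_prop)]
        refine lintegral_congr fun x₂ => ?_
        ring
    _ ≤ (∫⁻ x, a x * sf x ∂μ) * eLpNorm sg 2 μ * eLpNorm sh 2 μ * eLpNorm w 2 ν := by
        gcongr
        exact lintegral_lintegral_mul_comp_add_le (by fun_prop) hsg hsh
    _ ≤ eLpNorm a 2 μ * eLpNorm sf 2 μ * eLpNorm sg 2 μ * eLpNorm sh 2 μ * eLpNorm w 2 ν := by
        gcongr
        exact ENNReal.lintegral_mul_le_eLpNorm_two_mul ha.aemeasurable hsf.aemeasurable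
    _ = _ := by
        simp only [sf, sg, sh, eLpNorm_eLpNorm_section hf two_ne_zero ofNat_ne_top,
          eLpNorm_eLpNorm_section hg two_ne_zero ofNat_ne_top,
          eLpNorm_eLpNorm_section hh two_ne_zero ofNat_ne_top]
        ring

end Trilinear

theorem continuous_jb_rpow (r : ℝ) : Continuous fun x => jb x ^ r := by
  have hjb : Continuous jb := by unfold jb; fun_prop
  exact hjb.rpow_const fun x => Or.inl (Real.sqrt_pos.2 (by positivity)).ne'

theorem memLp_two_jb_rpow_neg {r : ℝ} (hr : 1 / 2 < r) : MemLp (fun x => jb x ^ (-r)) 2 := by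
  rw [memLp_two_iff_integrable_sq (continuous_jb_rpow _).aestronglyMeasurable]
  have hint := integrable_rpow_neg_one_add_norm_sq (E := ℝ) (μ := volume) (r := 2 * r)
    (by rw [Module.finrank_self, Nat.cast_one]; linarith)
  refine hint.congr (Filter.Eventually.of_forall fun x => ?_)
  simp only [jb]
  rw [Real.sqrt_eq_rpow, ← Real.rpow_mul (by positivity), ← Real.rpow_mul_natCast (by positivity),
    Real.norm_eq_abs, sq_abs]
  ring_nf

theorem stmt13_general (s b : ℝ) (hs : 1/2 < s) (hb : 1/2 < b)
    (e : ℝ) :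
    ∃ c > (0:ℝ), ∀ f g h : ℝ × ℝ → ℝ, Measurable f → Measurable g → Measurable h →
      (∀ x, 0 ≤ f x) → (∀ x, 0 ≤ g x) → (∀ x, 0 ≤ h x) →
      MemLp f 2 volume → MemLp g 2 volume → MemLp h 2 volume →
      (∫⁻ p : (ℝ × ℝ) × (ℝ × ℝ),
        ENNReal.ofReal (f p.1 * g p.2 * h (p.1.1 + p.2.1, p.1.2 + p.2.2) *
          jb p.1.1 ^ (-s) * jb (p.1.2 + p.2.2 + e * |p.1.1 + p.2.1|) ^ (-b)))
      ≤ ENNReal.ofReal c * eLpNorm f 2 volume * eLpNorm g 2 volume * eLpNorm h 2 volume := by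
  set C := eLpNorm (fun x => jb x ^ (-s)) 2 volume * eLpNorm (fun x => jb x ^ (-b)) 2 volume
  have hC : C ≠ ⊤ := mul_ne_top (memLp_two_jb_rpow_neg hs).eLpNorm_ne_top
    (memLp_two_jb_rpow_neg hb).eLpNorm_ne_top
  refine ⟨C.toReal + 1, by positivity, fun f g h hf hg hh _ _ _ _ _ _ => ?_⟩
  have hweights := lintegral_weighted_trilinear_le (μ := volume) (ν := volume)
    hf.enorm hg.enorm hh.enorm (continuous_jb_rpow (-s)).measurable.enorm
    (continuous_jb_rpow (-b)).measurable.enorm (measurable_abs.const_mul e)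
  simp only [eLpNorm_enorm, ← Measure.volume_eq_prod] at hweights
  calc _ ≤ ∫⁻ p : (ℝ × ℝ) × (ℝ × ℝ), ‖f p.1‖ₑ * ‖g p.2‖ₑ * ‖h (p.1.1 + p.2.1, p.1.2 + p.2.2)‖ₑ *
          ‖jb p.1.1 ^ (-s)‖ₑ * ‖jb (p.1.2 + p.2.2 + e * |p.1.1 + p.2.1|) ^ (-b)‖ₑ :=
        lintegral_mono fun p => (Real.ofReal_le_enorm _).trans_eq (by simp only [enorm_mul])
    _ ≤ C * eLpNorm f 2 volume * eLpNorm g 2 volume * eLpNorm h 2 volume := hweights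
    _ ≤ _ := by
        gcongr
        exact (ofReal_toReal hC).symm.trans_le (ofReal_le_ofReal (by linarith))

theorem stmt13 (s b : ℝ) (hs : 1/2 < s) (hb : 1/2 < b)
    (e : ℝ) (he : e = 1 ∨ e = -1) :
    ∃ c > (0:ℝ), ∀ f g h : ℝ × ℝ → ℝ, Measurable f → Measurable g → Measurable h →
      (∀ x, 0 ≤ f x) → (∀ x, 0 ≤ g x) → (∀ x, 0 ≤ h x) →
      MemLp f 2 volume → MemLp g 2 volume → MemLp h 2 volume →
      (∫⁻ p : (ℝ × ℝ) × (ℝ × ℝ),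
        ENNReal.ofReal (f p.1 * g p.2 * h (p.1.1 + p.2.1, p.1.2 + p.2.2) *
          jb p.1.1 ^ (-s) * jb (p.1.2 + p.2.2 + e * |p.1.1 + p.2.1|) ^ (-b)))
      ≤ ENNReal.ofReal c * eLpNorm f 2 volume * eLpNorm g 2 volume * eLpNorm h 2 volume :=
  stmt13_general s b hs hb e
end
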